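/- arXiv:2010.13356 — 2 statements merged into one kernel-verified Lean document; each statement's English description precedes it below -/
import Mathlib

section
/- The matrix equation A X B = C (with A ∈ ℝ^{m×n}, B ∈ ℝ^{p×q}, C ∈ ℝ^{m×q}, unknown X ∈ ℝ^{n×p}) has a solution if and only if A A† C B† B = C; in that case the general solution is X = A† C B† + Q - A† A Q B B† for arbitrary Q ∈ ℝ^{n×p}. -/
open Matrix

/-- `B` satisfies the four Penrose conditions for `A`, i.e. `B = A†`. -/
def IsMoorePenrose {m n : Type*} [Fintype m] [Fintype n] [DecidableEq m] [DecidableEq n]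
    (A : Matrix m n ℝ) (B : Matrix n m ℝ) : Prop :=
  A * B * A = A ∧ B * A * B = B ∧ (A * B)ᵀ = A * B ∧ (B * A)ᵀ = B * A

/-- `AXB = C` is solvable iff `A A† C B† B = C`, in which case the general solution is
`X = A† C B† + Q - A† A Q B B†` for arbitrary `Q`. -/
theorem stmt_6 (m n p q : ℕ)
    (A : Matrix (Fin m) (Fin n) ℝ) (B : Matrix (Fin p) (Fin q) ℝ)
    (C : Matrix (Fin m) (Fin q) ℝ)
    (Ad : Matrix (Fin n) (Fin m) ℝ) (Bd : Matrix (Fin q) (Fin p) ℝ)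
    (hA : IsMoorePenrose A Ad) (hB : IsMoorePenrose B Bd) :
    ((∃ X : Matrix (Fin n) (Fin p) ℝ, A * X * B = C) ↔ A * Ad * C * Bd * B = C) ∧
    (A * Ad * C * Bd * B = C →
      ∀ X : Matrix (Fin n) (Fin p) ℝ,
        A * X * B = C ↔
          ∃ Q : Matrix (Fin n) (Fin p) ℝ, X = Ad * C * Bd + Q - Ad * A * Q * B * Bd) := by
  obtain ⟨hA1, hA2, hA3, hA4⟩ := hA
  obtain ⟨hB1, hB2, hB3, hB4⟩ := hB
  constructor
  · constructor
    · rintro ⟨X, rfl⟩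
      have : A * Ad * (A * X * B) * Bd * B = (A * Ad * A) * X * (B * Bd * B) := by
        simp only [Matrix.mul_assoc]
      rw [this, hA1, hB1]
    · intro h
      refine ⟨Ad * C * Bd, ?_⟩
      have : A * (Ad * C * Bd) * B = A * Ad * C * Bd * B := by
        simp only [Matrix.mul_assoc]
      rw [this, h]
  · intro h X
    constructor
    · intro hX
      refine ⟨X, ?_⟩
      have h2 : Ad * C * Bd = Ad * A * X * (B * Bd) := by
        rw [← hX]; simp only [Matrix.mul_assoc]
      rw [h2]
      have h3 : Ad * A * X * B * Bd = Ad * A * X * (B * Bd) := by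
        simp only [Matrix.mul_assoc]
      rw [h3]; abel
    · rintro ⟨Q, rfl⟩
      have : A * (Ad * C * Bd + Q - Ad * A * Q * B * Bd) * B =
          A * Ad * C * Bd * B + A * Q * B - (A * Ad * A) * Q * (B * Bd * B) := by
        simp only [Matrix.mul_assoc, Matrix.mul_add, Matrix.mul_sub, Matrix.add_mul,
          Matrix.sub_mul]
      rw [this, hA1, hB1, h]
      abel
end

section
/- For matrices A ∈ ℝ^{m×n} and B ∈ ℝ^{p×q}, the solution set of the homogeneous equation A X B = 0 in X ∈ ℝ^{n×p} is exactly { Q - A† A Q B B† : Q ∈ ℝ^{n×p} }, and this set is a linear subspace of ℝ^{n×p}. -/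
open Matrix

/-- The solution set of the homogeneous equation `AXB = 0` is exactly
`{ Q - A†AQBB† : Q }`, and it is a linear subspace. -/
theorem stmt_7 (m n p q : ℕ)
    (A : Matrix (Fin m) (Fin n) ℝ) (B : Matrix (Fin p) (Fin q) ℝ)
    (Ad : Matrix (Fin n) (Fin m) ℝ) (Bd : Matrix (Fin q) (Fin p) ℝ)
    (hA : IsMoorePenrose A Ad) (hB : IsMoorePenrose B Bd) :
    (∀ X : Matrix (Fin n) (Fin p) ℝ,
      A * X * B = 0 ↔ ∃ Q : Matrix (Fin n) (Fin p) ℝ, X = Q - Ad * A * Q * B * Bd) ∧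
    ∃ S : Submodule ℝ (Matrix (Fin n) (Fin p) ℝ),
      ∀ X : Matrix (Fin n) (Fin p) ℝ, X ∈ S ↔ A * X * B = 0 := by
  obtain ⟨hA1, -, -, -⟩ := hA
  obtain ⟨hB1, -, -, -⟩ := hB
  constructor
  · intro X
    constructor
    · intro h
      refine ⟨X, ?_⟩
      have e : Ad * A * X * B * Bd = Ad * (A * X * B) * Bd := by
        simp [Matrix.mul_assoc]
      rw [e, h]
      simp
    · rintro ⟨Q, rfl⟩
      rw [Matrix.mul_sub, Matrix.sub_mul]
      have e : A * (Ad * A * Q * B * Bd) * B = (A * Ad * A) * Q * (B * Bd * B) := by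
        simp [Matrix.mul_assoc]
      rw [e, hA1, hB1, sub_self]
  · let f : Matrix (Fin n) (Fin p) ℝ →ₗ[ℝ] Matrix (Fin m) (Fin q) ℝ :=
      { toFun := fun X => A * X * B
        map_add' := by intro x y; simp [Matrix.mul_add, Matrix.add_mul]
        map_smul' := by intro c x; simp [Matrix.mul_smul, Matrix.smul_mul] }
    refine ⟨LinearMap.ker f, ?_⟩
    intro X
    simp [f, LinearMap.mem_ker]
end
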